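/- Let α, σ ∈ ℝ with ασ > 0, σ ≠ 1 and 1 + 1/σ > 0, let K > 0 and C ∈ ℝ, and let q > 1/(ασ). Then the function u defined by u(q) = (Kσ/(σ−1))·((1+ασq)^{1−1/σ}/q)·[q − ((σ−1)/(ασ))·∑_{n=0}^∞ ((1)_n (1)_n/(1+1/σ)_n)·(−1/(ασq))^n/n!] + C is differentiable at q with derivative u′(q) = K·(1+ασq)^{1−1/σ}/q. (This is the CREMR utility, the β → 1 limit case of the LFRRA family.) -/

import Mathlib

/-!
The series is `₂F₁(1, 1; c; z)` with `c = 1 + 1/σ` and `z = -1/(ασq)`, a power series of radius 1.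
Its coefficients satisfy `(n + c) aₙ₊₁ = (n + 1) aₙ`; summed against `zⁿ⁺¹` this becomes the
first-order equation `z (1 - z) F' = (z - (c - 1)) F + (c - 1)`. Substituting it for `F'` in the
product and chain rules, the terms containing `F` cancel.
-/

open Nat FormalMultilinearSeries

namespace FormalMultilinearSeries

variable {𝕜 : Type*} [NontriviallyNormedField 𝕜] [CompleteSpace 𝕜] {c : ℕ → 𝕜} {z : 𝕜}

theorem hasSum_ofScalars_mul_pow (hz : ‖z‖ₑ < (ofScalars 𝕜 c).radius) :
    HasSum (fun n => c n * z ^ n) (ofScalarsSum c z) := by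
  have h := (ofScalars 𝕜 c).hasSum (x := z) (by simpa using hz)
  simp only [ofScalars_apply_eq, smul_eq_mul] at h
  exact h

theorem differentiableAt_ofScalarsSum (hz : ‖z‖ₑ < (ofScalars 𝕜 c).radius) :
    DifferentiableAt 𝕜 (ofScalarsSum c) z :=
  ((ofScalars 𝕜 c).hasFDerivAt_sum hz).differentiableAt

theorem hasSum_deriv_ofScalarsSum (hz : ‖z‖ₑ < (ofScalars 𝕜 c).radius) :
    HasSum (fun n => (n + 1) * c (n + 1) * z ^ n) (deriv (ofScalarsSum c) z) := by
  unfold ofScalarsSum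
  rw [((ofScalars 𝕜 c).hasFDerivAt_sum hz).hasDerivAt.deriv]
  have hS := ((ofScalars 𝕜 c).derivSeries.hasSum (x := z)
    (by simpa using hz.trans_le (radius_le_radius_derivSeries _))).mapL
    (ContinuousLinearMap.apply 𝕜 𝕜 (1 : 𝕜))
  simp only [apply_eq_prod_smul_coeff, Finset.prod_const, Finset.card_univ, Fintype.card_fin,
    map_smul, ContinuousLinearMap.apply_apply, derivSeries_coeff_one, coeff_ofScalars,
    nsmul_eq_mul, Nat.cast_add, Nat.cast_one, smul_eq_mul] at hS
  exact hS.congr_fun fun n => by ring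

end FormalMultilinearSeries

theorem ordinaryHypergeometric_eq_tsum_div_factorial {𝕂 : Type*} [Field 𝕂] [TopologicalSpace 𝕂]
    [IsTopologicalRing 𝕂] (a b c x : 𝕂) :
    ₂F₁ a b c x = ∑' n : ℕ, ((ascPochhammer 𝕂 n).eval a * (ascPochhammer 𝕂 n).eval b /
      (ascPochhammer 𝕂 n).eval c) * x ^ n / n ! := by
  rw [ordinaryHypergeometric_eq_tsum]
  exact tsum_congr fun n => by rw [smul_eq_mul]; ring

theorem ordinaryHypergeometricCoefficient_one_one_succ {𝕂 : Type*} [Field 𝕂] [CharZero 𝕂] {c : 𝕂}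
    (hc : ∀ k : ℕ, (k : 𝕂) ≠ -c) (n : ℕ) :
    (n + c) * ordinaryHypergeometricCoefficient 1 1 c (n + 1) =
      (n + 1) * ordinaryHypergeometricCoefficient 1 1 c n := by
  have hcn : (ascPochhammer 𝕂 n).eval c ≠ 0 :=
    (ascPochhammer_eval_eq_zero_iff n c).not.mpr fun ⟨k, _, hk⟩ => hc k hk
  have hcn' : c + n ≠ 0 := fun h => hc n (eq_neg_of_add_eq_zero_right h)
  simp only [ordinaryHypergeometricCoefficient, ascPochhammer_eval_one, ascPochhammer_succ_eval,
    factorial_succ]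
  push_cast
  field_simp
  ring

section HypergeometricOneOne

variable {𝕂 : Type*} [RCLike 𝕂] {c z : 𝕂}

theorem enorm_lt_radius_ordinaryHypergeometricSeries_one_one (hc : ∀ k : ℕ, (k : 𝕂) ≠ -c)
    (hz : ‖z‖ < 1) : ‖z‖ₑ < (ordinaryHypergeometricSeries 𝕂 (1 : 𝕂) 1 c).radius := by
  have h1 (k : ℕ) : (k : 𝕂) ≠ -1 := fun h => Nat.cast_add_one_ne_zero k (by rw [h]; ring)
  rw [ordinaryHypergeometricSeries_radius_eq_one 𝕂 1 1 c fun k => ⟨h1 k, h1 k, hc k⟩]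
  simpa [enorm_eq_nnnorm, ← NNReal.coe_lt_coe] using hz

theorem ordinaryHypergeometric_one_one_ode (hc : ∀ k : ℕ, (k : 𝕂) ≠ -c) (hz : ‖z‖ < 1) :
    z * (1 - z) * deriv (₂F₁ 1 1 c) z = (z - (c - 1)) * ₂F₁ 1 1 c z + (c - 1) := by
  set a := ordinaryHypergeometricCoefficient (1 : 𝕂) 1 c
  have hr := enorm_lt_radius_ordinaryHypergeometricSeries_one_one hc hz
  set F : 𝕂 → 𝕂 := ₂F₁ 1 1 c
  set F' := deriv F z
  have hF : HasSum (fun n => a n * z ^ n) (F z) := hasSum_ofScalars_mul_pow hr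
  have hF' : HasSum (fun n => (n + 1) * a (n + 1) * z ^ n) F' := hasSum_deriv_ofScalarsSum hr
  have hF_tail : HasSum (fun n => a (n + 1) * z ^ (n + 1)) (F z - 1) := by
    simpa [a, ordinaryHypergeometricCoefficient] using (hasSum_nat_add_iff' 1).mpr hF
  have hzF' : HasSum (fun n => n * a n * z ^ n) (z * F') := by
    refine (hasSum_nat_add_iff' 1).mp ?_
    simpa [pow_succ, mul_comm, mul_left_comm, mul_assoc] using hF'.mul_left z
  have hlhs : HasSum (fun n => (n + c) * a (n + 1) * z ^ (n + 1))
      (z * F' + (c - 1) * (F z - 1)) :=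
    ((hF'.mul_left z).add (hF_tail.mul_left (c - 1))).congr_fun fun n => by ring
  have hrhs : HasSum (fun n => (n + c) * a (n + 1) * z ^ (n + 1)) (z * (z * F' + F z)) := by
    refine ((hzF'.add hF).mul_left z).congr_fun fun n => ?_
    rw [ordinaryHypergeometricCoefficient_one_one_succ hc]
    ring
  linear_combination hlhs.unique hrhs

theorem hasDerivAt_ordinaryHypergeometric_one_one (hc : ∀ k : ℕ, (k : 𝕂) ≠ -c) (hz : ‖z‖ < 1)
    (hz0 : z ≠ 0) :
    HasDerivAt (₂F₁ 1 1 c) (((z - (c - 1)) * ₂F₁ 1 1 c z + (c - 1)) / (z * (1 - z))) z := by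
  have hz1 : 1 - z ≠ 0 := fun h => by
    rw [← eq_of_sub_eq_zero h, norm_one] at hz
    exact lt_irrefl 1 hz
  rw [← ordinaryHypergeometric_one_one_ode hc hz, mul_div_cancel_left₀ _ (mul_ne_zero hz0 hz1)]
  exact (differentiableAt_ofScalarsSum
    (enorm_lt_radius_ordinaryHypergeometricSeries_one_one hc hz)).hasDerivAt

end HypergeometricOneOne

theorem hasDerivAt_neg_one_div_mul {a x : ℝ} (ha : a ≠ 0) (hx : x ≠ 0) :
    HasDerivAt (fun y : ℝ => -(1 / (a * y))) (1 / (a * x ^ 2)) x := by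
  refine ((hasDerivAt_const x (1 : ℝ)).fun_div (hasDerivAt_const_mul a)
    (mul_ne_zero ha hx)).fun_neg.congr_deriv ?_
  field_simp
  ring

/-- The output of the product, quotient and chain rules, with `₂F₁'` already eliminated through
`hasDerivAt_ordinaryHypergeometric_one_one`; `F` stands for `₂F₁(1, 1; 1 + 1/σ; -1/(ασq))`. -/
theorem cremr_utility_deriv_eq {α σ K q F : ℝ} (hασ : 0 < α * σ) (hσ1 : σ ≠ 1) (hq : 0 < q) :
    K * σ / (σ - 1) *
        ((α * σ * (1 - 1 / σ) * (1 + α * σ * q) ^ (1 - 1 / σ - 1) * q -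
          (1 + α * σ * q) ^ (1 - 1 / σ) * 1) / q ^ 2) * (q - (σ - 1) / (α * σ) * F) +
      K * σ / (σ - 1) * ((1 + α * σ * q) ^ (1 - 1 / σ) / q) *
        (1 - (σ - 1) / (α * σ) *
          (((-(1 / (α * σ * q)) - (1 + 1 / σ - 1)) * F + (1 + 1 / σ - 1)) /
            (-(1 / (α * σ * q)) * (1 - -(1 / (α * σ * q)))) * (1 / (α * σ * q ^ 2)))) =
      K * (1 + α * σ * q) ^ (1 - 1 / σ) / q := by
  have hy : 0 < 1 + α * σ * q := by positivity
  rw [show (1 + α * σ * q) ^ (1 - 1 / σ) = (1 + α * σ * q) ^ (1 - 1 / σ - 1) * (1 + α * σ * q) by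
    rw [← Real.rpow_add_one hy.ne']; ring_nf]
  generalize (1 + α * σ * q) ^ (1 - 1 / σ - 1) = E
  have hσ0 : σ ≠ 0 := by rintro rfl; simp at hασ
  have hα0 : α ≠ 0 := by rintro rfl; simp at hασ
  have hσ1' : σ - 1 ≠ 0 := sub_ne_zero.mpr hσ1
  have h1 : α * σ * q + 1 ≠ 0 := by positivity
  have h2 : σ * α * q + 1 ≠ 0 := by linarith
  simp only [sub_neg_eq_add]
  field_simp
  ring

theorem cremr_utility_hasDerivAt_general
    (α σ K C q : ℝ) (hασ : 0 < α * σ) (hσ1 : σ ≠ 1) (hσ : 0 < 1 + 1/σ)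
    (hq : 1 / (α * σ) < q) :
    HasDerivAt (fun x : ℝ =>
        (K * σ / (σ - 1)) * ((1 + α * σ * x) ^ (1 - 1/σ) / x) *
          (x - ((σ - 1) / (α * σ)) *
            ∑' (n : ℕ), ((ascPochhammer ℝ n).eval 1 * (ascPochhammer ℝ n).eval 1 /
              (ascPochhammer ℝ n).eval (1 + 1/σ)) * (-(1 / (α * σ * x))) ^ n /
                (Nat.factorial n : ℝ)) + C)
      (K * (1 + α * σ * q) ^ (1 - 1/σ) / q) q := by
  simp_rw [← ordinaryHypergeometric_eq_tsum_div_factorial]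
  have hq0 : 0 < q := (one_div_pos.mpr hασ).trans hq
  have hc (k : ℕ) : (k : ℝ) ≠ -(1 + 1 / σ) := by linarith [k.cast_nonneg (α := ℝ)]
  have hw : ‖-(1 / (α * σ * q))‖ < 1 := by
    rw [norm_neg, Real.norm_of_nonneg (by positivity), div_lt_one (by positivity)]
    rwa [div_lt_iff₀' hασ] at hq
  have hF := (hasDerivAt_ordinaryHypergeometric_one_one hc hw
    (neg_ne_zero.mpr (by positivity))).comp q
    (hasDerivAt_neg_one_div_mul hασ.ne' hq0.ne')
  have hP := ((hasDerivAt_const_mul (x := q) (α * σ)).const_add 1).rpow_const (p := 1 - 1 / σ)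
    (Or.inl (by positivity))
  exact ((((hP.fun_div (hasDerivAt_id' q) hq0.ne').const_mul (K * σ / (σ - 1))).fun_mul
    ((hasDerivAt_id' q).fun_sub (hF.const_mul ((σ - 1) / (α * σ))))).add_const C).congr_deriv
    (cremr_utility_deriv_eq hασ hσ1 hq0)

/-- The CREMR utility (the `β → 1` limit case of the LFRRA
family) has marginal utility `K·(1+ασq)^(1−1/σ)/q` at any `q > 1/(ασ)`. -/
theorem cremr_utility_hasDerivAt
    (α σ K C q : ℝ) (hασ : 0 < α * σ) (hσ1 : σ ≠ 1) (hσ : 0 < 1 + 1/σ)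
    (hK : 0 < K) (hq : 1 / (α * σ) < q) :
    HasDerivAt (fun x : ℝ =>
        (K * σ / (σ - 1)) * ((1 + α * σ * x) ^ (1 - 1/σ) / x) *
          (x - ((σ - 1) / (α * σ)) *
            ∑' (n : ℕ), ((ascPochhammer ℝ n).eval 1 * (ascPochhammer ℝ n).eval 1 /
              (ascPochhammer ℝ n).eval (1 + 1/σ)) * (-(1 / (α * σ * x))) ^ n /
                (Nat.factorial n : ℝ)) + C)
      (K * (1 + α * σ * q) ^ (1 - 1/σ) / q) q :=
  cremr_utility_hasDerivAt_general α σ K C q hασ hσ1 hσ hq
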